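/- arXiv:0902.2795 — 2 statements merged into one kernel-verified Lean document; each statement's English description precedes it below -/
import Mathlib

section
/- Let G=(V,E) be an undirected graph, T ⊆ V a set of terminals, and pq an edge of G with p,q ∈ V∖T. Then there is no pair of terminals u,v ∈ T for which both the deletion and the contraction of pq strictly decrease the element-connectivity; that is, it cannot hold simultaneously that κ'_{G−pq}(u,v) = κ'_G(u,v) − 1 and κ'_{G/pq}(u,v) = κ'_G(u,v) − 1. -/
open SimpleGraph

/-- Two walks between the same pair of vertices are *element-disjoint* with respect to a
terminal set `T` if they share no edges and every common vertex is a terminal or an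
endpoint. -/
def ElemDisjWalks {V : Type*} (T : Set V) {G : SimpleGraph V} {u v : V}
    (W₁ W₂ : G.Walk u v) : Prop :=
  (∀ e, e ∈ W₁.edges → e ∉ W₂.edges) ∧
  (∀ x, x ∈ W₁.support → x ∈ W₂.support → x ∈ T ∪ {u, v})

/-- There exist `k` pairwise element-disjoint `u`-`v` paths in `G`
(with respect to the terminal set `T`). -/
def HasElemPaths {V : Type*} (G : SimpleGraph V) (T : Set V) (u v : V) (k : ℕ) : Prop :=
  ∃ P : Fin k → G.Walk u v, (∀ i, (P i).IsPath) ∧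
    ∀ i j, i ≠ j → ElemDisjWalks T (P i) (P j)

/-- The element-connectivity `κ'_G(u,v)`: the maximum number of `u`-`v` paths that are
pairwise disjoint in edges and in non-terminal vertices. -/
noncomputable def elemConn {V : Type*} (G : SimpleGraph V) (T : Set V) (u v : V) : ℕ :=
  sSup {k | HasElemPaths G T u v k}

/-- The graph `G/pq` obtained from `G` by contracting the edge `pq`: the merged vertex
is `p`, and `q` becomes an isolated vertex (so the vertex set is unchanged). -/
def contractEdge {V : Type*} [DecidableEq V] (G : SimpleGraph V) (p q : V) :
    SimpleGraph V :=
  SimpleGraph.fromRel (fun a b =>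
    ∃ x y, G.Adj x y ∧ (if x = q then p else x) = a ∧ (if y = q then p else y) = b)

/-!
Take a maximum family of element-disjoint `u`-`v` paths in `G`. If no path uses `pq`, the
family survives in `G - pq`. Otherwise one path uses `pq`, and since `p`, `q` are neither
terminals nor endpoints, no other path meets `p` or `q`. Contracting `pq` therefore turns that
path into a `u`-`v` walk (shortened to a path) and leaves the others untouched, so the family
survives in `G / pq`. Either way one of the two connectivities stays at `κ'_G(u,v)`.
-/

section

variable {V V' : Type*}

theorem Sym2.eq_of_map_eq {α β : Type*} {f : α → β} {A B : Set α}
    (hf : ∀ x ∈ A, ∀ y ∈ B, f x = f y → x = y) {e₁ e₂ : Sym2 α}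
    (h₁ : ∀ x ∈ e₁, x ∈ A) (h₂ : ∀ y ∈ e₂, y ∈ B) (h : e₁.map f = e₂.map f) : e₁ = e₂ := by
  induction e₁, e₂ using Sym2.inductionOn₂ with
  | _ a b c d =>
    simp only [Sym2.mem_iff, forall_eq_or_imp, forall_eq] at h₁ h₂
    rw [Sym2.map_mk, Sym2.map_mk, Sym2.eq_iff] at h
    rw [Sym2.eq_iff]
    rcases h with ⟨hac, hbd⟩ | ⟨had, hbc⟩
    · exact .inl ⟨hf a h₁.1 c h₂.1 hac, hf b h₁.2 d h₂.2 hbd⟩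
    · exact .inr ⟨hf a h₁.1 d h₂.2 had, hf b h₁.2 c h₂.1 hbc⟩

namespace SimpleGraph.Walk

variable {G : SimpleGraph V} {H : SimpleGraph V'}

theorem exists_walk_map_of_adj_or_eq (f : V → V') : ∀ {a b : V} (W : G.Walk a b),
    (∀ x y, s(x, y) ∈ W.edges → f x = f y ∨ H.Adj (f x) (f y)) →
    ∃ W' : H.Walk (f a) (f b),
      W'.support ⊆ W.support.map f ∧ W'.edges ⊆ W.edges.map (Sym2.map f)
  | _, _, .nil, _ => ⟨.nil, by simp, by simp⟩
  | a, _, .cons (v := c) _ W, hf => by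
    obtain ⟨W', hsupp, hedges⟩ := exists_walk_map_of_adj_or_eq f W fun x y h =>
      hf x y (by rw [edges_cons]; exact List.mem_cons_of_mem _ h)
    rcases hf a c (by simp) with heq | hadj
    · exact ⟨W'.copy heq.symm rfl,
        by simpa using List.Subset.trans hsupp (List.subset_cons_self _ _),
        by simpa using List.Subset.trans hedges (List.subset_cons_self _ _)⟩
    · exact ⟨.cons hadj W', by simpa using List.cons_subset_cons _ hsupp,
        by simpa using List.cons_subset_cons _ hedges⟩

theorem exists_path_map_of_adj_or_eq (f : V → V') {a b : V} (W : G.Walk a b)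
    (hf : ∀ x y, s(x, y) ∈ W.edges → f x = f y ∨ H.Adj (f x) (f y)) :
    ∃ W' : H.Walk (f a) (f b), W'.IsPath ∧
      W'.support ⊆ W.support.map f ∧ W'.edges ⊆ W.edges.map (Sym2.map f) := by
  classical
  obtain ⟨W', hsupp, hedges⟩ := W.exists_walk_map_of_adj_or_eq f hf
  exact ⟨W'.bypass, W'.bypass_isPath,
    List.Subset.trans (support_bypass_subset_support W') hsupp,
    List.Subset.trans (edges_bypass_subset_edges W') hedges⟩

end SimpleGraph.Walk

variable {G : SimpleGraph V} {T : Set V} {u v : V} {k : ℕ}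

theorem hasElemPaths_zero : HasElemPaths G T u v 0 :=
  ⟨Fin.elim0, fun i => i.elim0, fun i => i.elim0⟩

theorem eq_of_mem_support_of_elemDisjWalks {P : Fin k → G.Walk u v}
    (hP : ∀ i j, i ≠ j → ElemDisjWalks T (P i) (P j)) {x : V} (hx : x ∉ T ∪ {u, v})
    {i j : Fin k} (hi : x ∈ (P i).support) (hj : x ∈ (P j).support) : i = j :=
  by_contra fun hij => hx ((hP i j hij).2 x hi hj)

theorem bddAbove_setOf_hasElemPaths [Finite V] (huv : u ≠ v) :
    BddAbove {k | HasElemPaths G T u v k} := by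
  have := Fintype.ofFinite V
  refine ⟨Fintype.card V, fun k ⟨P, _, hP⟩ => ?_⟩
  have hnil : ∀ i, ¬(P i).Nil := fun i => Walk.not_nil_of_ne huv
  have hinj : Function.Injective fun i => (P i).snd := by
    intro i j (hij : (P i).snd = (P j).snd)
    by_contra hne
    exact (hP i j hne).1 _ ((P i).mk_start_snd_mem_edges (hnil i))
      (hij ▸ (P j).mk_start_snd_mem_edges (hnil j))
  simpa using Fintype.card_le_of_injective _ hinj

theorem HasElemPaths.le_elemConn [Finite V] (huv : u ≠ v) (h : HasElemPaths G T u v k) :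
    k ≤ elemConn G T u v :=
  le_csSup (bddAbove_setOf_hasElemPaths huv) h

theorem hasElemPaths_elemConn [Finite V] (huv : u ≠ v) :
    HasElemPaths G T u v (elemConn G T u v) :=
  Nat.sSup_mem ⟨0, hasElemPaths_zero⟩ (bddAbove_setOf_hasElemPaths huv)

theorem hasElemPaths_of_map {H : SimpleGraph V'} {T' : Set V'} (f : V → V')
    (P : Fin k → G.Walk u v) (hP : ∀ i j, i ≠ j → ElemDisjWalks T (P i) (P j))
    (hadj : ∀ i x y, s(x, y) ∈ (P i).edges → f x = f y ∨ H.Adj (f x) (f y))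
    (hinj : ∀ i j, i ≠ j → ∀ x ∈ (P i).support, ∀ y ∈ (P j).support, f x = f y → x = y)
    (hT : ∀ t ∈ T, f t ∈ T') :
    HasElemPaths H T' (f u) (f v) k := by
  choose Q hQ hsupp hedges using fun i => (P i).exists_path_map_of_adj_or_eq f (hadj i)
  refine ⟨Q, hQ, fun i j hij => ⟨fun e hei hej => ?_, fun x hxi hxj => ?_⟩⟩
  · obtain ⟨e₁, he₁, rfl⟩ := List.mem_map.mp (hedges i hei)
    obtain ⟨e₂, he₂, he⟩ := List.mem_map.mp (hedges j hej)
    have : e₂ = e₁ := Sym2.eq_of_map_eq (hinj j i hij.symm)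
      (fun _ => Walk.mem_support_of_mem_edges he₂)
      (fun _ => Walk.mem_support_of_mem_edges he₁) he
    exact (hP i j hij).1 e₁ he₁ (this ▸ he₂)
  · obtain ⟨y, hy, rfl⟩ := List.mem_map.mp (hsupp i hxi)
    obtain ⟨y', hy', hyy'⟩ := List.mem_map.mp (hsupp j hxj)
    obtain rfl := hinj j i hij.symm y' hy' y hy hyy'
    rcases (hP i j hij).2 y' hy hy' with ht | rfl | rfl
    exacts [.inl (hT _ ht), .inr (.inl rfl), .inr (.inr rfl)]

theorem hasElemPaths_deleteEdges {s : Set (Sym2 V)} {P : Fin k → G.Walk u v}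
    (hP : ∀ i j, i ≠ j → ElemDisjWalks T (P i) (P j)) (hs : ∀ i, ∀ e ∈ (P i).edges, e ∉ s) :
    HasElemPaths (G.deleteEdges s) T u v k :=
  hasElemPaths_of_map id P hP
    (fun i _ _ h => .inr ((deleteEdges_adj ..).mpr ⟨(P i).adj_of_mem_edges h, hs i _ h⟩))
    (fun _ _ _ _ _ _ _ => id) (fun _ => id)

theorem eq_or_contractEdge_adj [DecidableEq V] {p q x y : V} (h : G.Adj x y) :
    (if x = q then p else x) = (if y = q then p else y) ∨
      (contractEdge G p q).Adj (if x = q then p else x) (if y = q then p else y) :=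
  or_iff_not_imp_left.mpr fun hne => (fromRel_adj _ _ _).mpr ⟨hne, .inl ⟨x, y, h, rfl, rfl⟩⟩

theorem hasElemPaths_contractEdge [DecidableEq V] {p q : V} {P : Fin k → G.Walk u v}
    (hP : ∀ i j, i ≠ j → ElemDisjWalks T (P i) (P j)) (hp : p ∉ T ∪ {u, v})
    (hq : q ∉ T ∪ {u, v}) {i₀ : Fin k} (hpq : s(p, q) ∈ (P i₀).edges) :
    HasElemPaths (contractEdge G p q) T u v k := by
  set c : V → V := fun x => if x = q then p else x with hc
  have hc_fix : ∀ x ∈ T ∪ {u, v}, c x = x :=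
    fun x hx => if_neg fun (h : x = q) => hq (h ▸ hx)
  have hc_merge : ∀ x y, c x = c y → x = y ∨ (x = p ∨ x = q) ∧ (y = p ∨ y = q) := by
    intro x y hxy
    simp only [hc] at hxy
    split_ifs at hxy <;> tauto
  have honly : ∀ i x, x ∈ (P i).support → x = p ∨ x = q → i = i₀ := by
    rintro i x hx (rfl | rfl)
    · exact eq_of_mem_support_of_elemDisjWalks hP hp hx
        ((P i₀).fst_mem_support_of_mem_edges hpq)
    · exact eq_of_mem_support_of_elemDisjWalks hP hq hx
        ((P i₀).snd_mem_support_of_mem_edges hpq)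
  have hinj : ∀ i j, i ≠ j → ∀ x ∈ (P i).support, ∀ y ∈ (P j).support, c x = c y → x = y := by
    intro i j hij x hx y hy hxy
    refine (hc_merge x y hxy).resolve_right fun ⟨hx', hy'⟩ => hij ?_
    exact (honly i x hx hx').trans (honly j y hy hy').symm
  have := hasElemPaths_of_map c P hP
    (fun i _ _ h => eq_or_contractEdge_adj ((P i).adj_of_mem_edges h))
    hinj fun t ht => (hc_fix t (.inl ht)).symm ▸ ht
  rwa [hc_fix u (by simp), hc_fix v (by simp)] at this

end

theorem no_pair_decreases_for_both_general {V : Type*} [Fintype V] [DecidableEq V]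
    (G : SimpleGraph V) (T : Set V) (p q : V)
    (hp : p ∉ T) (hq : q ∉ T) :
    ∀ u ∈ T, ∀ v ∈ T, u ≠ v →
      ¬ (elemConn (G.deleteEdges {s(p, q)}) T u v + 1 = elemConn G T u v ∧
         elemConn (contractEdge G p q) T u v + 1 = elemConn G T u v) := by
  rintro u hu v hv huv ⟨hdel, hcon⟩
  obtain ⟨P, -, hP⟩ := hasElemPaths_elemConn (G := G) (T := T) huv
  have hnonterminal : ∀ x ∉ T, x ∉ T ∪ {u, v} := by
    rintro x hx (h | rfl | rfl) <;> contradiction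
  by_cases huse : ∃ i, s(p, q) ∈ (P i).edges
  · obtain ⟨i₀, hi₀⟩ := huse
    have hcontract := hasElemPaths_contractEdge hP (hnonterminal p hp) (hnonterminal q hq) hi₀
    have := hcontract.le_elemConn huv
    omega
  · simp only [not_exists] at huse
    have hdelete : HasElemPaths (G.deleteEdges {s(p, q)}) T u v _ :=
      hasElemPaths_deleteEdges hP fun i e he h => huse i (h ▸ he)
    have := hdelete.le_elemConn huv
    omega

/-- For an edge `pq` between non-terminals, there is no pair of terminals whose
element-connectivity is strictly decreased both by deleting `pq` and by
contracting `pq`. -/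
theorem no_pair_decreases_for_both {V : Type*} [Fintype V] [DecidableEq V]
    (G : SimpleGraph V) (T : Set V) (p q : V)
    (hp : p ∉ T) (hq : q ∉ T) (hpq : G.Adj p q) :
    ∀ u ∈ T, ∀ v ∈ T, u ≠ v →
      ¬ (elemConn (G.deleteEdges {s(p, q)}) T u v + 1 = elemConn G T u v ∧
         elemConn (contractEdge G p q) T u v + 1 = elemConn G T u v) :=
  no_pair_decreases_for_both_general G T p q hp hq
end

section
/- Consider the single-sink k-vertex-connectivity problem on an undirected graph G=(V,E) with root r and terminals T. Let T' ⊆ T, let H' be a subgraph of G containing k internally vertex-disjoint paths from each terminal of T' to r, and let p₁,…,p_k be an augmentation for a terminal t ∈ T ∖ T' with respect to T'. Then the subgraph H' ∪ p₁ ∪ ⋯ ∪ p_k contains k internally vertex-disjoint paths from each terminal of T' ∪ {t} to r. -/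
open SimpleGraph

/-- `H` contains `k` internally vertex-disjoint `t`-`r` paths. -/
def HasFan {V : Type*} (H : SimpleGraph V) (t r : V) (k : ℕ) : Prop :=
  ∃ P : Fin k → H.Walk t r, (∀ i, (P i).IsPath) ∧
    ∀ i j, i ≠ j → ∀ x, x ∈ (P i).support → x ∈ (P j).support → x = t ∨ x = r

/-- The total cost of the edges of `H`. -/
noncomputable def cost {V : Type*} (c : Sym2 V → ℝ) (H : SimpleGraph V) : ℝ :=
  ∑ᶠ e ∈ H.edgeSet, c e

/-! By Menger's theorem it suffices that every set `C` of fewer than `k` vertices avoiding `t`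
and `r` misses some `t`–`r` walk of the augmented graph. The augmentation paths pairwise meet
only in `t` or in a common endpoint, and two of them can share only the endpoint `r`; so `C`
misses one of them, say `pᵢ` ending in `eᵢ`. If `eᵢ ≠ r`, then `C` also misses one of the `k`
internally disjoint `eᵢ`–`r` paths of `H'`, and `pᵢ` followed by that path avoids `C`.

Menger's theorem is proved in its `A`–`B` form by induction on the number of edges, contracting
an edge `xy` (Diestel's first proof); the `t`–`r` form is the `A`–`B` form for the
neighbourhoods of `t` and `r` in the graph without the edges at `t` and `r`. -/

theorem Set.exists_injective_mem_of_le_ncard {V : Type*} {s : Set V} {k : ℕ} (h : k ≤ s.ncard) :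
    ∃ f : Fin k → V, Function.Injective f ∧ ∀ i, f i ∈ s := by
  obtain ⟨t, hts, htk⟩ := Set.exists_subset_card_eq h
  rcases k.eq_zero_or_pos with rfl | hk
  · exact ⟨Fin.elim0, fun i => i.elim0, fun i => i.elim0⟩
  have : Finite t := Set.finite_of_ncard_pos (htk ▸ hk)
  let e : t ≃ Fin k := (Finite.equivFin t).trans (finCongr (by simpa using htk))
  exact ⟨fun i => e.symm i, Subtype.val_injective.comp e.symm.injective, fun i => hts (e.symm i).2⟩

namespace SimpleGraph

variable {V : Type*} {G G' : SimpleGraph V} {A B S T : Set V} {k : ℕ}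

def Separates (G : SimpleGraph V) (A B S : Set V) : Prop :=
  ∀ ⦃a b : V⦄, a ∈ A → b ∈ B → ∀ w : G.Walk a b, ∃ v ∈ S, v ∈ w.support

def HasDisjointWalks (G : SimpleGraph V) (A B : Set V) (k : ℕ) : Prop :=
  ∃ (a b : Fin k → V) (w : ∀ i, G.Walk (a i) (b i)), (∀ i, a i ∈ A) ∧ (∀ i, b i ∈ B) ∧
    ∀ i j, i ≠ j → ∀ x ∈ (w i).support, x ∉ (w j).support

theorem Separates.symm (h : G.Separates A B S) : G.Separates B A S := fun _ _ ha hb w => by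
  simpa using h hb ha w.reverse

theorem HasDisjointWalks.symm (h : G.HasDisjointWalks A B k) : G.HasDisjointWalks B A k := by
  obtain ⟨a, b, w, ha, hb, hw⟩ := h
  exact ⟨b, a, fun i => (w i).reverse, hb, ha, by simpa using hw⟩

theorem HasDisjointWalks.mono (hle : G ≤ G') (h : G.HasDisjointWalks A B k) :
    G'.HasDisjointWalks A B k := by
  obtain ⟨a, b, w, ha, hb, hw⟩ := h
  exact ⟨a, b, fun i => (w i).mapLe hle, ha, hb, by simpa using hw⟩

theorem hasDisjointWalks_of_le_ncard_inter (h : k ≤ (A ∩ B).ncard) :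
    G.HasDisjointWalks A B k := by
  obtain ⟨f, hf, hfAB⟩ := Set.exists_injective_mem_of_le_ncard h
  refine ⟨f, f, fun i => .nil, fun i => (hfAB i).1, fun i => (hfAB i).2, ?_⟩
  simp only [Walk.support_nil, List.mem_singleton, forall_eq]
  exact fun i j hij hji => hij (hf hji)

theorem separates_inter_of_edgeSet_eq_empty (hE : G.edgeSet = ∅) : G.Separates A B (A ∩ B) := by
  rintro a b ha hb (_ | ⟨hadj, _⟩)
  · exact ⟨a, ⟨ha, hb⟩, Walk.start_mem_support _⟩
  · exact absurd hE (Set.nonempty_iff_ne_empty.mp ⟨_, G.mem_edgeSet.mpr hadj⟩)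

theorem Walk.exists_isPath_first_mem {a b : V} (w : G.Walk a b) (h : ∃ u ∈ w.support, u ∈ S) :
    ∃ z ∈ S, ∃ p : G.Walk a z, p.IsPath ∧ p.support ⊆ w.support ∧
      ∀ u ∈ p.support, u ∈ S → u = z := by
  classical
  suffices ∃ z ∈ S, ∃ p : G.Walk a z, p.support ⊆ w.support ∧ ∀ u ∈ p.support, u ∈ S → u = z by
    obtain ⟨z, hz, p, hpw, hpS⟩ := this
    exact ⟨z, hz, p.bypass, p.bypass_isPath, List.Subset.trans p.support_bypass_subset_support hpw,
      fun u hu => hpS u (p.support_bypass_subset_support hu)⟩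
  induction w with
  | nil =>
    obtain ⟨u, hu, huS⟩ := h
    obtain rfl : u = _ := by simpa using hu
    exact ⟨u, huS, .nil, by simp⟩
  | @cons a c b hac w ih =>
    by_cases ha : a ∈ S
    · exact ⟨a, ha, .nil, by simp⟩
    obtain ⟨z, hz, p, hpw, hpS⟩ := ih (by simpa [ha] using h)
    refine ⟨z, hz, .cons hac p, ?_, ?_⟩
    · simpa using List.cons_subset_cons _ hpw
    · simp only [Walk.support_cons, List.mem_cons, forall_eq_or_imp]
      exact ⟨fun h => absurd h ha, hpS⟩

theorem Walk.IsPath.eq_of_mem_takeUntil [DecidableEq V] {a z u v : V} {p : G.Walk a z}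
    (hp : p.IsPath) (hpS : ∀ u ∈ p.support, u ∈ S → u = z) (hv : v ∈ p.support)
    (hu : u ∈ (p.takeUntil v hv).support) (huS : u ∈ S) : v = z := by
  obtain rfl := hpS u (p.support_takeUntil_subset_support hv hu) huS
  by_contra hvu
  exact Walk.endpoint_notMem_support_takeUntil hp hv (Ne.symm hvu) hu

theorem HasDisjointWalks.exists_isPath_first_mem (h : G.HasDisjointWalks A S k) :
    ∃ (a z : Fin k → V) (p : ∀ i, G.Walk (a i) (z i)), (∀ i, a i ∈ A) ∧ (∀ i, z i ∈ S) ∧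
      (∀ i, (p i).IsPath) ∧ (∀ i, ∀ u ∈ (p i).support, u ∈ S → u = z i) ∧
      ∀ i j, i ≠ j → ∀ x ∈ (p i).support, x ∉ (p j).support := by
  obtain ⟨a, b, w, ha, hb, hw⟩ := h
  choose z hz p hp hpw hpS using
    fun i => (w i).exists_isPath_first_mem ⟨b i, (w i).end_mem_support, hb i⟩
  exact ⟨a, z, p, ha, hz, hp, hpS, fun i j hij x hxi hxj => hw i j hij x (hpw i hxi) (hpw j hxj)⟩

theorem injective_of_disjoint_support {ι : Type*} {a z : ι → V} {p : ∀ i, G.Walk (a i) (z i)}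
    (hp : ∀ i j, i ≠ j → ∀ x ∈ (p i).support, x ∉ (p j).support) : Function.Injective z :=
  fun i j hij => by_contra fun hne =>
    hp i j hne _ (p i).end_mem_support (by rw [hij]; exact (p j).end_mem_support)

theorem HasDisjointWalks.trans [Finite V] (hAS : G.HasDisjointWalks A S k)
    (hSB : G.HasDisjointWalks S B k) (hS : G.Separates A B S) (hcard : S.ncard = k) :
    G.HasDisjointWalks A B k := by
  classical
  obtain ⟨a, z, p, ha, hz, hp, hpS, hpd⟩ := hAS.exists_isPath_first_mem
  obtain ⟨b, y, q, hb, hy, hq, hqS, hqd⟩ := hSB.symm.exists_isPath_first_mem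
  -- `p i` up to `v`, then `q j` back from `v`, is an `A`–`B` walk, so it meets `S`.
  have cross : ∀ i j v, v ∈ (p i).support → v ∈ (q j).support → v = z i ∧ v = y j := by
    intro i j v hvp hvq
    obtain ⟨u, huS, hu⟩ :=
      hS (ha i) (hb j) (((p i).takeUntil v hvp).append ((q j).takeUntil v hvq).reverse)
    rw [Walk.mem_support_append_iff, Walk.support_reverse, List.mem_reverse] at hu
    rcases hu with hu | hu
    · have hvz := (hp i).eq_of_mem_takeUntil (hpS i) hvp hu huS
      exact ⟨hvz, hqS j v hvq (hvz ▸ hz i)⟩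
    · have hvy := (hq j).eq_of_mem_takeUntil (hqS j) hvq hu huS
      exact ⟨hpS i v hvp (hvy ▸ hy j), hvy⟩
  have hz_inj := injective_of_disjoint_support hpd
  have hy_inj := injective_of_disjoint_support hqd
  have hy_range : Set.range y = S := Set.eq_of_subset_of_ncard_le (Set.range_subset_iff.2 hy)
    (by rw [hcard, Set.ncard_range_of_injective hy_inj, Nat.card_fin])
  choose σ hσ using fun i => hy_range ▸ hz i
  have hσ_inj : Function.Injective σ := fun i j hij => hz_inj (by rw [← hσ i, ← hσ j, hij])
  refine ⟨a, fun i => b (σ i), fun i => (p i).append ((q (σ i)).reverse.copy (hσ i) rfl), ha,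
    fun i => hb (σ i), fun i j hij x hxi hxj => ?_⟩
  simp only [Walk.mem_support_append_iff, Walk.support_copy, Walk.support_reverse,
    List.mem_reverse] at hxi hxj
  rcases hxi with hxi | hxi <;> rcases hxj with hxj | hxj
  · exact hpd i j hij x hxi hxj
  · obtain ⟨hxz, hxy⟩ := cross i _ x hxi hxj
    exact hij (hz_inj (hxz.symm.trans (hxy.trans (hσ j))))
  · obtain ⟨hxz, hxy⟩ := cross j _ x hxj hxi
    exact hij (hz_inj ((hxy.trans (hσ i)).symm.trans hxz))
  · exact hqd _ _ (hσ_inj.ne hij) x hxi hxj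

theorem Separates.of_deleteEdges {x y : V} (hS : G.Separates A B S) (hx : x ∈ S) (hy : y ∈ S)
    (hT : (G.deleteEdges {s(x, y)}).Separates A S T) : G.Separates A B T := by
  intro a b ha hb w
  obtain ⟨v, hvS, hv⟩ := hS ha hb w
  obtain ⟨z, hz, p, -, hpw, hpS⟩ := w.exists_isPath_first_mem ⟨v, hv, hvS⟩
  have hxy : s(x, y) ∉ p.edges := fun hmem => by
    have hadj := p.adj_of_mem_edges hmem
    rw [hpS x (p.fst_mem_support_of_mem_edges hmem) hx,
      hpS y (p.snd_mem_support_of_mem_edges hmem) hy] at hadj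
    exact hadj.ne rfl
  obtain ⟨u, huT, hu⟩ := hT ha hz (p.toDeleteEdge _ hxy)
  exact ⟨u, huT, hpw (by simpa using hu)⟩

section Contraction

variable [DecidableEq V] {x y : V}

/-- Contracting `xy` merges `y` into `x`; `y` becomes an isolated vertex, so the vertex type
stays `V`. -/
def contractMap (x y v : V) : V := if v = y then x else v

def contract (G : SimpleGraph V) (x y : V) : SimpleGraph V :=
  fromRel fun u v => ∃ u' v', G.Adj u' v' ∧ contractMap x y u' = u ∧ contractMap x y v' = v

@[simp] theorem contractMap_right : contractMap x y y = x := if_pos rfl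

theorem contractMap_of_ne {v : V} (h : v ≠ y) : contractMap x y v = v := if_neg h

theorem contract_adj {u v : V} : (G.contract x y).Adj u v ↔
    u ≠ v ∧ ∃ u' v', G.Adj u' v' ∧ contractMap x y u' = u ∧ contractMap x y v' = v := by
  refine ⟨fun ⟨hne, h⟩ => ⟨hne, ?_⟩, fun ⟨hne, h⟩ => ⟨hne, .inl h⟩⟩
  rcases h with h | ⟨u', v', hadj, hu, hv⟩
  · exact h
  · exact ⟨v', u', hadj.symm, hv, hu⟩

theorem Walk.exists_walk_contract {a b : V} (w : G.Walk a b) :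
    ∃ wc : (G.contract x y).Walk (contractMap x y a) (contractMap x y b),
      wc.support ⊆ w.support.map (contractMap x y) := by
  induction w with
  | nil => exact ⟨.nil, by simp⟩
  | @cons a c b hac w ih =>
    obtain ⟨wc, hwc⟩ := ih
    by_cases hfac : contractMap x y a = contractMap x y c
    · refine ⟨wc.copy hfac.symm rfl, ?_⟩
      simpa using List.Subset.trans hwc (List.subset_cons_self _ _)
    · refine ⟨.cons (contract_adj.2 ⟨hfac, a, c, hac, rfl, rfl⟩) wc, ?_⟩
      simpa using List.cons_subset_cons _ hwc

theorem exists_walk_of_contractMap_eq (hadj : G.Adj x y) {α β : V}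
    (h : contractMap x y α = contractMap x y β) :
    ∃ w : G.Walk α β, ∀ s ∈ w.support, contractMap x y s = contractMap x y α := by
  have toImage : ∀ α, ∃ w : G.Walk α (contractMap x y α),
      ∀ s ∈ w.support, contractMap x y s = contractMap x y α := by
    intro α
    by_cases hα : α = y
    · subst hα
      refine ⟨(Walk.cons hadj.symm .nil).copy rfl contractMap_right.symm, ?_⟩
      simp [contractMap_of_ne hadj.ne]
    · exact ⟨Walk.nil.copy rfl (contractMap_of_ne hα).symm, by simp⟩
  obtain ⟨wα, hwα⟩ := toImage α
  obtain ⟨wβ, hwβ⟩ := toImage β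
  refine ⟨wα.append (wβ.reverse.copy h.symm rfl), fun s hs => ?_⟩
  simp only [Walk.mem_support_append_iff, Walk.support_copy, Walk.support_reverse,
    List.mem_reverse] at hs
  rcases hs with hs | hs
  · exact hwα s hs
  · exact (hwβ s hs).trans h.symm

theorem Walk.exists_walk_of_contract (hadj : G.Adj x y) {u v : V}
    (wc : (G.contract x y).Walk u v) {α β : V} (hα : contractMap x y α = u)
    (hβ : contractMap x y β = v) :
    ∃ w : G.Walk α β, ∀ s ∈ w.support, contractMap x y s ∈ wc.support := by
  induction wc generalizing α with
  | nil =>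
    obtain ⟨w, hw⟩ := exists_walk_of_contractMap_eq hadj (hα.trans hβ.symm)
    exact ⟨w, fun s hs => by simp [hw s hs, hα]⟩
  | cons huc p ih =>
    obtain ⟨-, u', v', hadj', hu', hv'⟩ := contract_adj.1 huc
    obtain ⟨w₁, hw₁⟩ := exists_walk_of_contractMap_eq hadj (hα.trans hu'.symm)
    obtain ⟨w₂, hw₂⟩ := ih hv' hβ
    refine ⟨w₁.append (.cons hadj' w₂), fun s hs => ?_⟩
    simp only [Walk.mem_support_append_iff, Walk.support_cons, List.mem_cons] at hs
    rcases hs with hs | rfl | hs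
    · simp [hw₁ s hs, hα]
    · simp [hu']
    · exact List.mem_cons_of_mem _ (hw₂ s hs)

theorem HasDisjointWalks.of_contract (hadj : G.Adj x y)
    (h : (G.contract x y).HasDisjointWalks (contractMap x y '' A) (contractMap x y '' B) k) :
    G.HasDisjointWalks A B k := by
  obtain ⟨a, b, w, ha, hb, hw⟩ := h
  choose α hα hαa using ha
  choose β hβ hβb using hb
  choose w' hw' using fun i => (w i).exists_walk_of_contract hadj (hαa i) (hβb i)
  exact ⟨α, β, w', hα, hβ, fun i j hij s hsi hsj => hw i j hij _ (hw' i s hsi) (hw' j s hsj)⟩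

theorem Separates.of_contract {Y : Set V}
    (h : (G.contract x y).Separates (contractMap x y '' A) (contractMap x y '' B) Y) :
    G.Separates A B (contractMap x y ⁻¹' Y) := by
  intro a b ha hb w
  obtain ⟨wc, hwc⟩ := w.exists_walk_contract (x := x) (y := y)
  obtain ⟨ξ, hξY, hξ⟩ := h (Set.mem_image_of_mem _ ha) (Set.mem_image_of_mem _ hb) wc
  obtain ⟨u, hu, rfl⟩ := List.mem_map.1 (hwc hξ)
  exact ⟨u, hξY, hu⟩

theorem ncard_edgeSet_contract_lt [Finite V] (hadj : G.Adj x y) :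
    (G.contract x y).edgeSet.ncard < G.edgeSet.ncard := by
  have hsub : (G.contract x y).edgeSet ⊆ Sym2.map (contractMap x y) '' (G.edgeSet \ {s(x, y)}) := by
    intro e he
    induction e using Sym2.ind with | _ u v => ?_
    obtain ⟨hne, u', v', hadj', rfl, rfl⟩ := contract_adj.1 he
    refine ⟨s(u', v'), ⟨hadj', ?_⟩, rfl⟩
    rintro h
    simp only [Set.mem_singleton_iff, Sym2.eq_iff] at h
    rcases h with ⟨rfl, rfl⟩ | ⟨rfl, rfl⟩ <;> simp [contractMap_of_ne hadj.ne] at hne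
  calc (G.contract x y).edgeSet.ncard
      ≤ (Sym2.map (contractMap x y) '' (G.edgeSet \ {s(x, y)})).ncard := Set.ncard_le_ncard hsub
    _ ≤ (G.edgeSet \ {s(x, y)}).ncard := Set.ncard_image_le
    _ < G.edgeSet.ncard := Set.ncard_sdiff_singleton_lt_of_mem hadj

end Contraction

theorem hasDisjointWalks_of_forall_le_ncard [Finite V] {G : SimpleGraph V} {A B : Set V} {k : ℕ}
    (h : ∀ S, G.Separates A B S → k ≤ S.ncard) : G.HasDisjointWalks A B k := by
  classical
  induction hn : G.edgeSet.ncard using Nat.strong_induction_on generalizing G A B with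
  | _ n ih =>
  rcases G.edgeSet.eq_empty_or_nonempty with hE | ⟨e, he⟩
  · exact hasDisjointWalks_of_le_ncard_inter (h _ (separates_inter_of_edgeSet_eq_empty hE))
  induction e using Sym2.ind with | _ x y => ?_
  have hadj : G.Adj x y := he
  by_cases hc : ∀ Y, (G.contract x y).Separates (contractMap x y '' A) (contractMap x y '' B) Y →
      k ≤ Y.ncard
  · exact (ih _ (hn ▸ ncard_edgeSet_contract_lt hadj) hc rfl).of_contract hadj
  push Not at hc
  obtain ⟨Y, hY, hYk⟩ := hc
  set S := contractMap x y ⁻¹' Y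
  have hS : G.Separates A B S := hY.of_contract
  -- `S` is `Y` with `x` expanded back into `{x, y}`; as `S` separates in `G` and `|Y| < k`,
  -- `Y` must contain `x`, and then `|S| = k`.
  have hxY : x ∈ Y := by
    by_contra hxY
    have hSY : S ⊆ Y := fun v hv => by
      by_cases hvy : v = y
      · subst hvy
        exact absurd (by simpa [S] using hv) hxY
      · simpa [S, contractMap_of_ne hvy] using hv
    exact (h S hS).not_gt ((Set.ncard_le_ncard hSY).trans_lt hYk)
  have hSk : S.ncard = k := by
    refine le_antisymm ?_ (h S hS)
    have hSY : S ⊆ insert y Y := fun v hv => by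
      by_cases hvy : v = y
      · exact .inl hvy
      · exact .inr (by simpa [S, contractMap_of_ne hvy] using hv)
    exact (Set.ncard_le_ncard hSY).trans ((Set.ncard_insert_le _ _).trans hYk)
  have hxS : x ∈ S := by simp [S, contractMap_of_ne hadj.ne, hxY]
  have hyS : y ∈ S := by simp [S, hxY]
  have hG' : (G.deleteEdges {s(x, y)}).edgeSet.ncard < n := by
    rw [← hn, edgeSet_deleteEdges]
    exact Set.ncard_sdiff_singleton_lt_of_mem he
  have hAS := ih _ hG' (fun T hT => h T (hS.of_deleteEdges hxS hyS hT)) rfl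
  have hSB := ih _ hG' (fun T hT => h T (hS.symm.of_deleteEdges hxS hyS hT.symm).symm) rfl
  exact (hAS.mono (G.deleteEdges_le _)).trans (hSB.mono (G.deleteEdges_le _)) hS hSk

theorem Walk.exists_walk_deleteIncidenceSet {x a b : V} (w : G.Walk a b) (hx : x ∉ w.support) :
    ∃ w' : (G.deleteIncidenceSet x).Walk a b, w'.support = w.support := by
  refine ⟨w.transfer _ fun e he => ?_, w.support_transfer _⟩
  induction e using Sym2.ind with | _ u v => ?_
  show (G.deleteIncidenceSet x).Adj u v
  rw [deleteIncidenceSet_adj]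
  exact ⟨w.adj_of_mem_edges he, fun h => hx (h ▸ w.fst_mem_support_of_mem_edges he),
    fun h => hx (h ▸ w.snd_mem_support_of_mem_edges he)⟩

theorem Walk.IsPath.exists_adj_notMem {s b : V} {p : G.Walk s b} (hp : p.IsPath) (hsb : s ≠ b) :
    ∃ a, G.Adj s a ∧ ∃ q : G.Walk a b, q.IsPath ∧ s ∉ q.support ∧ q.support ⊆ p.support := by
  cases p with
  | nil => exact absurd rfl hsb
  | cons hsa q =>
    rw [Walk.cons_isPath_iff] at hp
    exact ⟨_, hsa, q, hp.1, hp.2, List.subset_cons_self _ _⟩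

theorem Walk.exists_walk_deleteIncidenceSet_deleteIncidenceSet {s r : V} (hsr : s ≠ r)
    (hadj : ¬G.Adj s r) (W : G.Walk s r) :
    ∃ a b, G.Adj s a ∧ G.Adj r b ∧
      ∃ w : ((G.deleteIncidenceSet s).deleteIncidenceSet r).Walk a b,
        w.support ⊆ W.support ∧ s ∉ w.support ∧ r ∉ w.support := by
  classical
  obtain ⟨a, hsa, q, hq, hsq, hqW⟩ := W.bypass_isPath.exists_adj_notMem hsr
  obtain ⟨b, hrb, q', -, hrq', hq'q⟩ :=
    hq.reverse.exists_adj_notMem (fun hra => hadj (hra ▸ hsa))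
  have hq'q : q'.reverse.support ⊆ q.support := by simpa using hq'q
  have hsq' : s ∉ q'.reverse.support := fun h => hsq (hq'q h)
  have hrq' : r ∉ q'.reverse.support := by simpa using hrq'
  obtain ⟨w₁, hw₁⟩ := q'.reverse.exists_walk_deleteIncidenceSet hsq'
  obtain ⟨w₂, hw₂⟩ := w₁.exists_walk_deleteIncidenceSet (hw₁ ▸ hrq')
  rw [hw₁] at hw₂
  refine ⟨a, b, hsa, hrb, w₂, ?_, hw₂ ▸ hsq', hw₂ ▸ hrq'⟩
  rw [hw₂]
  exact List.Subset.trans hq'q (List.Subset.trans hqW W.support_bypass_subset_support)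

theorem Walk.edges_subset_edgeSet_of_toSubgraph_le {u v : V} (p : G.Walk u v)
    (h : p.toSubgraph.spanningCoe ≤ G') : ∀ e ∈ p.edges, e ∈ G'.edgeSet :=
  fun _ he => edgeSet_mono h (p.mem_edges_toSubgraph.2 he)

theorem Separates.exists_mem_diff_support {s r : V} (hsr : s ≠ r) (hadj : ¬G.Adj s r)
    (hS : ((G.deleteIncidenceSet s).deleteIncidenceSet r).Separates
      (G.neighborSet s) (G.neighborSet r) S) (W : G.Walk s r) :
    ∃ c ∈ S \ {s, r}, c ∈ W.support := by
  obtain ⟨a, b, hsa, hrb, w, hwW, hsw, hrw⟩ :=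
    W.exists_walk_deleteIncidenceSet_deleteIncidenceSet hsr hadj
  obtain ⟨c, hcS, hc⟩ := hS hsa hrb w
  refine ⟨c, ⟨hcS, ?_⟩, hwW hc⟩
  rintro (rfl | rfl)
  exacts [hsw hc, hrw hc]

end SimpleGraph

open SimpleGraph

theorem exists_forall_notMem_of_ncard_lt {V ι : Type*} [Finite V] [Finite ι] {C : Set V}
    (S : ι → Set V) (hS : ∀ i j, i ≠ j → ∀ c ∈ C, c ∈ S i → c ∉ S j)
    (hC : C.ncard < Nat.card ι) : ∃ i, ∀ c ∈ C, c ∉ S i := by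
  by_contra! h
  choose c hcC hcS using h
  have hc : Function.Injective c := fun i j hij => by
    by_contra hne
    exact hS i j hne _ (hcC i) (hcS i) (hij ▸ hcS j)
  have := Set.ncard_le_ncard (Set.range_subset_iff.2 hcC)
  rw [Set.ncard_range_of_injective hc] at this
  exact this.not_gt hC

section Fan

variable {V : Type*} {H H' : SimpleGraph V} {s r : V} {k : ℕ}

theorem HasFan.mono (hle : H ≤ H') (h : HasFan H s r k) : HasFan H' s r k := by
  obtain ⟨P, hP, hd⟩ := h
  exact ⟨fun i => (P i).mapLe hle, fun i => (hP i).mapLe hle, by simpa using hd⟩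

theorem HasFan.exists_walk_forall_notMem [Finite V] {C : Set V} (h : HasFan H s r k)
    (hs : s ∉ C) (hr : r ∉ C) (hC : C.ncard < k) : ∃ W : H.Walk s r, ∀ c ∈ C, c ∉ W.support := by
  obtain ⟨P, -, hd⟩ := h
  have hPC : ∀ i j, i ≠ j → ∀ c ∈ C, c ∈ (P i).support → c ∉ (P j).support :=
    fun i j hij c hc hci hcj => by
      rcases hd i j hij c hci hcj with rfl | rfl
      exacts [hs hc, hr hc]
  obtain ⟨i, hi⟩ :=
    exists_forall_notMem_of_ncard_lt (fun i => {x | x ∈ (P i).support}) hPC (by simpa using hC)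
  exact ⟨P i, hi⟩

theorem hasFan_of_forall_le_ncard [Finite V]
    (h : ∀ C : Set V, s ∉ C → r ∉ C → (∀ W : H.Walk s r, ∃ c ∈ C, c ∈ W.support) → k ≤ C.ncard) :
    HasFan H s r k := by
  classical
  by_cases hsr : s = r
  · subst hsr
    exact ⟨fun _ => .nil, fun _ => .nil, by simp⟩
  by_cases hadj : H.Adj s r
  · exact ⟨fun _ => .cons hadj .nil, fun _ => by simp [hsr], by simp⟩
  let H₀ := (H.deleteIncidenceSet s).deleteIncidenceSet r
  have hsep : ∀ S, H₀.Separates (H.neighborSet s) (H.neighborSet r) S → k ≤ S.ncard :=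
    fun S hS => (h (S \ {s, r}) (by simp) (by simp) (hS.exists_mem_diff_support hsr hadj)).trans
      (Set.ncard_le_ncard Set.sdiff_subset)
  obtain ⟨a, b, w, ha, hb, hw⟩ := hasDisjointWalks_of_forall_le_ncard hsep
  have hH₀ : H₀ ≤ H := (deleteIncidenceSet_le _ _).trans (deleteIncidenceSet_le _ _)
  let F : Fin k → H.Walk s r := fun i =>
    (Walk.cons ((H.mem_neighborSet _ _).1 (ha i)) ((w i).mapLe hH₀)).append
      (.cons ((H.mem_neighborSet _ _).1 (hb i)).symm .nil)
  have hF : ∀ i, ∀ x ∈ (F i).support, x = s ∨ x = r ∨ x ∈ (w i).support := fun i x hx => by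
    simp only [F, Walk.mem_support_append_iff, Walk.support_cons, Walk.support_mapLe_eq_support,
      Walk.support_nil, List.mem_cons, List.not_mem_nil, or_false] at hx
    rcases hx with (rfl | hx) | rfl | rfl
    exacts [.inl rfl, .inr (.inr hx), .inr (.inr (w i).end_mem_support), .inr (.inl rfl)]
  refine ⟨fun i => (F i).bypass, fun i => (F i).bypass_isPath, fun i j hij x hxi hxj => ?_⟩
  rcases hF i x ((F i).support_bypass_subset_support hxi) with hx | hx | hxi
  · exact .inl hx
  · exact .inr hx
  rcases hF j x ((F j).support_bypass_subset_support hxj) with hx | hx | hxj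
  · exact .inl hx
  · exact .inr hx
  · exact absurd hxj (hw i j hij x hxi)

end Fan

theorem augmentation_feasible_general {V : Type*} [Fintype V]
    (G : SimpleGraph V) (r : V) (T' : Set V) (k : ℕ)
    (H' : SimpleGraph V)
    (hH' : ∀ s ∈ T', HasFan H' s r k)
    (t : V)
    (e : Fin k → V) (he : ∀ i, e i ∈ T' ∪ {r})
    (P : ∀ i, G.Walk t (e i))
    (hdisj : ∀ i j, i ≠ j → ∀ x, x ∈ (P i).support → x ∈ (P j).support →
      x = t ∨ (x = e i ∧ x = e j))
    (hend : ∀ t' ∈ T', ({i | e i = t'} : Set (Fin k)).Subsingleton) :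
    ∀ s ∈ T' ∪ {t},
      HasFan (H' ⊔ ⨆ i, ((P i).toSubgraph).spanningCoe) s r k := by
  set H := H' ⊔ ⨆ i, ((P i).toSubgraph).spanningCoe
  rintro s (hs | rfl)
  · exact (hH' s hs).mono le_sup_left
  refine hasFan_of_forall_le_ncard fun C htC hrC hC => ?_
  by_contra! hCk
  have hPC : ∀ i j, i ≠ j → ∀ c ∈ C, c ∈ (P i).support → c ∉ (P j).support :=
    fun i j hij c hc hci hcj => by
      rcases hdisj i j hij c hci hcj with rfl | ⟨rfl, hij'⟩
      · exact htC hc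
      rcases he i with hei | hei
      · exact hij (hend _ hei rfl hij'.symm)
      · exact hrC (hei ▸ hc)
  obtain ⟨i, hi⟩ :=
    exists_forall_notMem_of_ncard_lt (fun i => {x | x ∈ (P i).support}) hPC (by simpa using hCk)
  obtain ⟨W, hW⟩ : ∃ W : H.Walk (e i) r, ∀ c ∈ C, c ∉ W.support := by
    rcases he i with hei | hei
    · exact ((hH' _ hei).mono le_sup_left).exists_walk_forall_notMem
        (fun h => hi _ h (P i).end_mem_support) hrC hCk
    · exact ⟨Walk.nil.copy hei.symm rfl, fun c hc hcW => hrC (by simp_all)⟩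
  have hPH : ∀ e ∈ (P i).edges, e ∈ H.edgeSet := (P i).edges_subset_edgeSet_of_toSubgraph_le
    ((le_iSup (fun i => (P i).toSubgraph.spanningCoe) i).trans le_sup_right)
  obtain ⟨c, hcC, hc⟩ := hC (((P i).transfer H hPH).append W)
  rw [Walk.mem_support_append_iff, Walk.support_transfer] at hc
  exact hc.elim (hi c hcC) (hW c hcC)

/-- **Augmentation proposition.** If `H'` contains `k` internally vertex-disjoint paths
from each terminal of `T'` to the root `r`, and `p₁, …, p_k` is an augmentation for
`t ∈ T \ T'` with respect to `T'`, then `H'` together with the paths contains `k`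
internally vertex-disjoint paths from each terminal of `T' ∪ {t}` to `r`. -/
theorem augmentation_feasible {V : Type*} [Fintype V]
    (G : SimpleGraph V) (r : V) (T T' : Set V) (hT' : T' ⊆ T) (k : ℕ)
    (H' : SimpleGraph V) (hH'le : H' ≤ G)
    (hH' : ∀ s ∈ T', HasFan H' s r k)
    (t : V) (ht : t ∈ T) (htn : t ∉ T')
    (e : Fin k → V) (he : ∀ i, e i ∈ T' ∪ {r})
    (P : ∀ i, G.Walk t (e i)) (hP : ∀ i, (P i).IsPath)
    (hdisj : ∀ i j, i ≠ j → ∀ x, x ∈ (P i).support → x ∈ (P j).support →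
      x = t ∨ (x = e i ∧ x = e j))
    (hend : ∀ t' ∈ T', ({i | e i = t'} : Set (Fin k)).Subsingleton) :
    ∀ s ∈ T' ∪ {t},
      HasFan (H' ⊔ ⨆ i, ((P i).toSubgraph).spanningCoe) s r k :=
  augmentation_feasible_general G r T' k H' hH' t e he P hdisj hend
end
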